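/- Exponential-decay bound (Proposition 1, part 3, with the additive correction needed to make it precise): for every real b > 0, every real a > 0, and all integers n ≥ 1 and r ≥ 1, Σ_{i=1}^{r} (n·e^{−ai})/(b + n·e^{−ai})² ≤ (1/a)·( 1/(b + n·e^{−a(r+1)}) − 1/(b + n) ) + 1/(2b). -/

import Mathlib

/-!
Write `u(t) = n e^{-at}`, so that the summand is `f(t) = u/(b + u)²` and
`g(t) = a⁻¹ (b + u(t))⁻¹` has `g' = f`. The map `u ↦ u/(b + u)²` increases on `[0, b]`, decreases
on `[b, ∞)` and is at most `1/(4b)`; as `u` is decreasing, `f` increases up to the point `c` where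
`u(c) = b` and decreases after it. By the mean value theorem, a term `f(i)` with `i + 1 ≤ c` is at
most the increment of `g` over `[i, i + 1]`, and a term with `c ≤ i - 1` at most its increment over
`[i - 1, i]`. These unit intervals are disjoint and lie in `[0, r + 1]`, and at most two indices
are left over, each contributing at most `1/(4b)`.
-/

open Set Real

theorem sum_range_le_sub_add_two_mul_of_unimodal {f F : ℕ → ℝ} {M : ℝ} (p r : ℕ)
    (hF : Monotone F) (hfM : ∀ i, f i ≤ M) (hM : 0 ≤ M)
    (hinc : ∀ i < p, f i ≤ F (i + 1) - F i) (hdec : ∀ i, p < i → f (i + 1) ≤ F (i + 1) - F i) :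
    ∑ i ∈ Finset.range (r + 1), f i ≤ F (r + 1) - F 0 + 2 * M := by
  have hfwd : ∀ m ≤ p, ∑ i ∈ Finset.range m, f i ≤ F m - F 0 := fun m hm =>
    (Finset.sum_le_sum fun i hi => hinc i (by rw [Finset.mem_range] at hi; omega)).trans_eq
      (Finset.sum_range_sub F m)
  have hbwd (m : ℕ) : ∑ i ∈ Finset.range m, f (p + 2 + i) ≤ F (p + 1 + m) - F (p + 1) := by
    rw [← Finset.sum_range_sub (fun i => F (p + 1 + i)) m]
    refine Finset.sum_le_sum fun i _ => ?_
    have := hdec (p + 1 + i) (by omega)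
    ring_nf at this ⊢
    exact this
  rcases le_or_gt r p with hrp | hpr
  · rw [Finset.sum_range_succ]
    linarith [hfwd r hrp, hfM r, hF r.le_succ]
  · obtain ⟨m, rfl⟩ := Nat.exists_eq_add_of_lt hpr
    rw [show p + m + 1 + 1 = p + 2 + m by omega, Finset.sum_range_add, Finset.sum_range_succ,
      Finset.sum_range_succ]
    linarith [hfwd p le_rfl, hbwd m, hfM p, hfM (p + 1), hF p.le_succ,
      hF (show p + 1 + m ≤ p + 2 + m by omega)]

theorem mul_sub_le_sub_of_hasDerivAt_of_le {f g : ℝ → ℝ} {C x y : ℝ} (hxy : x ≤ y)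
    (hg : ∀ t ∈ Icc x y, HasDerivAt g (f t) t) (hC : ∀ t ∈ Ioo x y, C ≤ f t) :
    C * (y - x) ≤ g y - g x :=
  (convex_Icc x y).mul_sub_le_image_sub_of_le_deriv
    (fun t ht => (hg t ht).continuousAt.continuousWithinAt)
    (fun t ht => by
      rw [interior_Icc] at ht
      exact (hg t (Ioo_subset_Icc_self ht)).differentiableAt.differentiableWithinAt)
    (fun t ht => by
      rw [interior_Icc] at ht
      rw [(hg t (Ioo_subset_Icc_self ht)).deriv]
      exact hC t ht)
    x (left_mem_Icc.2 hxy) y (right_mem_Icc.2 hxy) hxy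

theorem sum_range_le_sub_add_two_mul_of_hasDerivAt_of_unimodal {f g : ℝ → ℝ} {c M : ℝ}
    (hg : ∀ t, HasDerivAt g (f t) t) (hf : ∀ t, 0 ≤ f t) (hfM : ∀ t, f t ≤ M)
    (hmono : MonotoneOn f (Iic c)) (hanti : AntitoneOn f (Ici c)) (r : ℕ) :
    ∑ i ∈ Finset.range (r + 1), f i ≤ g (r + 1) - g 0 + 2 * M := by
  have step (i : ℕ) {C : ℝ} (hC : ∀ t ∈ Ioo (i : ℝ) (i + 1), C ≤ f t) :
      C ≤ g ↑(i + 1) - g i := by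
    push_cast
    simpa using mul_sub_le_sub_of_hasDerivAt_of_le (by linarith) (fun t _ => hg t) hC
  have hleft {i : ℕ} (hi : i < ⌊c⌋₊) : (i : ℝ) + 1 ≤ c := by
    exact_mod_cast (Nat.le_floor_iff' i.succ_ne_zero).1 hi
  have hright {i : ℕ} (hi : ⌊c⌋₊ < i) : c ≤ i :=
    (Nat.lt_floor_add_one c).le.trans (by exact_mod_cast hi)
  have key := sum_range_le_sub_add_two_mul_of_unimodal (f := fun i : ℕ => f i) ⌊c⌋₊ r
    ((monotone_of_hasDerivAt_nonneg hg hf).comp Nat.mono_cast) (fun i => hfM i)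
    ((hf 0).trans (hfM 0))
    (fun i hi => step i fun t ht => hmono (mem_Iic.2 <| by linarith [hleft hi])
      (mem_Iic.2 <| by linarith [hleft hi, ht.2]) ht.1.le)
    (fun i hi => step i fun t ht => hanti (mem_Ici.2 <| by linarith [hright hi, ht.1])
      (mem_Ici.2 <| by push_cast; linarith [hright hi]) (by push_cast; exact ht.2.le))
  simpa using key

theorem div_add_sq_le_one_div_four_mul {b v : ℝ} (hb : 0 < b) (hv : 0 ≤ v) :
    v / (b + v) ^ 2 ≤ 1 / (4 * b) := by
  rw [div_le_div_iff₀ (by positivity) (by positivity)]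
  nlinarith [sq_nonneg (b - v)]

theorem monotoneOn_div_add_sq {b : ℝ} (hb : 0 < b) :
    MonotoneOn (fun v => v / (b + v) ^ 2) (Icc 0 b) := by
  intro u hu v hv huv
  simp only
  rw [div_le_div_iff₀ (pow_pos (by linarith [hu.1]) 2) (pow_pos (by linarith [hv.1]) 2)]
  nlinarith [mul_nonneg (sub_nonneg.2 huv) (sub_nonneg.2 (mul_le_mul hu.2 hv.2 hv.1 hb.le))]

theorem antitoneOn_div_add_sq {b : ℝ} (hb : 0 < b) :
    AntitoneOn (fun v => v / (b + v) ^ 2) (Ici b) := by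
  intro u hu v hv huv
  rw [mem_Ici] at hu hv
  simp only
  rw [div_le_div_iff₀ (pow_pos (by linarith) 2) (pow_pos (by linarith) 2)]
  nlinarith [mul_nonneg (sub_nonneg.2 huv) (sub_nonneg.2 (mul_le_mul hu hv hb.le (hb.le.trans hu)))]

theorem hasDerivAt_inv_add_mul_exp {a b k : ℝ} (ha : a ≠ 0) (hb : 0 < b) (hk : 0 ≤ k) (t : ℝ) :
    HasDerivAt (fun t => 1 / a * (1 / (b + k * exp (-a * t))))
      (k * exp (-a * t) / (b + k * exp (-a * t)) ^ 2) t := by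
  have hden : b + k * exp (-a * t) ≠ 0 := by positivity
  have := ((((hasDerivAt_id t).const_mul (-a)).exp.const_mul k).const_add b).inv hden
    |>.const_mul (1 / a)
  simp only [id, mul_one, one_div] at this ⊢
  exact this.congr_deriv (by field_simp)

theorem exponential_decay_bound_general (b a : ℝ) (hb : 0 < b) (ha : 0 < a)
    (n r : ℕ) (hn : 1 ≤ n) :
    ∑ i ∈ Finset.Icc 1 r, ((n : ℝ) * Real.exp (-a * i)) / (b + (n : ℝ) * Real.exp (-a * i)) ^ 2
      ≤ (1 / a) * (1 / (b + (n : ℝ) * Real.exp (-a * ((r : ℝ) + 1))) - 1 / (b + (n : ℝ)))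
        + 1 / (2 * b) := by
  have hn0 : (0 : ℝ) < n := by exact_mod_cast hn
  set u : ℝ → ℝ := fun t => n * exp (-a * t)
  have hu : Antitone u := fun s t hst =>
    mul_le_mul_of_nonneg_left (exp_le_exp.2 (by nlinarith)) hn0.le
  have hpeak : u (log (n / b) / a) = b := by
    simp only [u]
    rw [neg_mul, mul_div_cancel₀ _ ha.ne', exp_neg, exp_log (by positivity)]
    field_simp
  have hf (t : ℝ) : 0 ≤ u t / (b + u t) ^ 2 := by positivity
  calc _ ≤ ∑ i ∈ Finset.range (r + 1), u i / (b + u i) ^ 2 :=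
        Finset.sum_le_sum_of_subset_of_nonneg
          (fun i hi => Finset.mem_range.2 (by rw [Finset.mem_Icc] at hi; omega)) fun i _ _ => hf i
    _ ≤ _ := sum_range_le_sub_add_two_mul_of_hasDerivAt_of_unimodal
        (hasDerivAt_inv_add_mul_exp ha.ne' hb hn0.le) hf
        (fun t => div_add_sq_le_one_div_four_mul hb (by positivity))
        ((antitoneOn_div_add_sq hb).comp (hu.antitoneOn _) fun t ht => hpeak ▸ hu ht)
        ((monotoneOn_div_add_sq hb).comp_AntitoneOn (hu.antitoneOn _)
          fun t ht => ⟨by positivity, hpeak ▸ hu ht⟩) r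
    _ = _ := by
      rw [mul_zero, exp_zero, mul_one]
      ring

/-- Exponential-decay bound (Proposition 1, part 3, with additive correction):
for every `b > 0`, `a > 0` and integers `n, r ≥ 1`,
`∑_{i=1}^{r} (n·e^{−ai})/(b + n·e^{−ai})² ≤ (1/a)·(1/(b + n·e^{−a(r+1)}) − 1/(b + n)) + 1/(2b)`. -/
theorem exponential_decay_bound (b a : ℝ) (hb : 0 < b) (ha : 0 < a)
    (n r : ℕ) (hn : 1 ≤ n) (hr : 1 ≤ r) :
    ∑ i ∈ Finset.Icc 1 r, ((n : ℝ) * Real.exp (-a * i)) / (b + (n : ℝ) * Real.exp (-a * i)) ^ 2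
      ≤ (1 / a) * (1 / (b + (n : ℝ) * Real.exp (-a * ((r : ℝ) + 1))) - 1 / (b + (n : ℝ)))
        + 1 / (2 * b) :=
  exponential_decay_bound_general b a hb ha n r hn
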